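/- arXiv:2104.02983 — 2 statements merged into one kernel-verified Lean document; each statement's English description precedes it below -/
import Mathlib

section
/- Consider the full mixed NCW Lanchester system: B' = −[αd + (αc − αd)·N/N0]·R − γ·A, R' = −π1·βR·B, N' = −π2·βN·B, A' = −π3·βA·B, with all parameters nonnegative, αd ≤ αc, N0 > 0, and initial values R(0)=R0, N(0)=N0, A(0)=A0. Let X(t) = ∫₀ᵗ B(s) ds. Then X satisfies X'' = −C1·X² + C2·X − C3 where C1 = π1·π2·βR·βN·(αc − αd)/N0, C2 = [π2·βN·(αc − αd)·R0 + π1·βR·αc·N0]/N0 + γ·π3·βA, and C3 = αc·R0 + γ·A0. -/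
/-!
Each of `R`, `N`, `A` is depleted at a rate proportional to `B = X'`, so it is an affine function of
`X`. Substituting these into the equation for `B'` turns its right-hand side into a quadratic
polynomial in `X`, since the attrition rate `f(N)` is itself affine in `N`.
-/

theorem eq_sub_mul_sub_of_hasDerivAt_neg_mul {f g g' : ℝ → ℝ} {c : ℝ}
    (hf : ∀ t, HasDerivAt f (-(c * g' t)) t) (hg : ∀ t, HasDerivAt g (g' t) t) (a b : ℝ) :
    f b = f a - c * (g b - g a) := by
  have hsum : ∀ t, HasDerivAt (fun s => f s + c * g s) 0 t := fun t =>
    ((hf t).add ((hg t).const_mul c)).congr_deriv (by ring)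
  have hconst := is_const_of_deriv_eq_zero (fun t => (hsum t).differentiableAt)
    (fun t => (hsum t).deriv) b a
  linarith

theorem lanchester_rhs_eq_quadratic (p1 p2 p3 bR bN bA ac ad g R0 N0 A0 x : ℝ) (hN0 : N0 ≠ 0) :
    -((ad + (ac - ad) * (N0 - p2 * bN * x) / N0) * (R0 - p1 * bR * x)) - g * (A0 - p3 * bA * x) =
      -(p1 * p2 * bR * bN * (ac - ad) / N0) * x ^ 2 +
        ((p2 * bN * (ac - ad) * R0 + p1 * bR * ac * N0) / N0 + g * p3 * bA) * x -
        (ac * R0 + g * A0) := by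
  field_simp
  ring

theorem stmt_9_general (B R N A : ℝ → ℝ)
    (p1 p2 p3 bR bN bA ac ad g R0 N0 A0 : ℝ)
    (hN0 : 0 < N0)
    (hBcont : Continuous B)
    (hB : ∀ t, HasDerivAt B
      (-((ad + (ac - ad) * N t / N0) * R t) - g * A t) t)
    (hR : ∀ t, HasDerivAt R (-(p1 * bR * B t)) t)
    (hN : ∀ t, HasDerivAt N (-(p2 * bN * B t)) t)
    (hA : ∀ t, HasDerivAt A (-(p3 * bA * B t)) t)
    (hR0 : R 0 = R0) (hN0' : N 0 = N0) (hA0 : A 0 = A0)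
    (X : ℝ → ℝ) (hX : ∀ t, X t = ∫ s in (0:ℝ)..t, B s) :
    ∀ t : ℝ,
      HasDerivAt X (B t) t ∧
      HasDerivAt B
        (-(p1 * p2 * bR * bN * (ac - ad) / N0) * (X t) ^ 2 +
          ((p2 * bN * (ac - ad) * R0 + p1 * bR * ac * N0) / N0 + g * p3 * bA)
            * X t -
          (ac * R0 + g * A0)) t := by
  have hXB : ∀ t, HasDerivAt X (B t) t := fun t =>
    funext hX ▸ (hBcont.integral_hasStrictDerivAt 0 t).hasDerivAt
  have hX0 : X 0 = 0 := by simp [hX]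
  intro t
  refine ⟨hXB t, ?_⟩
  have depleted {F : ℝ → ℝ} {c F0 : ℝ} (hF : ∀ s, HasDerivAt F (-(c * B s)) s) (hF0 : F 0 = F0) :
      F t = F0 - c * X t := by
    simpa [hF0, hX0] using eq_sub_mul_sub_of_hasDerivAt_neg_mul hF hXB 0 t
  rw [← lanchester_rhs_eq_quadratic p1 p2 p3 bR bN bA ac ad g R0 N0 A0 (X t) hN0.ne',
    ← depleted hR hR0, ← depleted hN hN0', ← depleted hA hA0]
  exact hB t

theorem stmt_9 (B R N A : ℝ → ℝ)
    (p1 p2 p3 bR bN bA ac ad g R0 N0 A0 : ℝ)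
    (hp1 : 0 ≤ p1) (hp2 : 0 ≤ p2) (hp3 : 0 ≤ p3)
    (hbR : 0 ≤ bR) (hbN : 0 ≤ bN) (hbA : 0 ≤ bA)
    (hac : 0 ≤ ac) (had : 0 ≤ ad) (hg : 0 ≤ g)
    (hda : ad ≤ ac) (hN0 : 0 < N0)
    (hBcont : Continuous B)
    (hB : ∀ t, HasDerivAt B
      (-((ad + (ac - ad) * N t / N0) * R t) - g * A t) t)
    (hR : ∀ t, HasDerivAt R (-(p1 * bR * B t)) t)
    (hN : ∀ t, HasDerivAt N (-(p2 * bN * B t)) t)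
    (hA : ∀ t, HasDerivAt A (-(p3 * bA * B t)) t)
    (hR0 : R 0 = R0) (hN0' : N 0 = N0) (hA0 : A 0 = A0)
    (X : ℝ → ℝ) (hX : ∀ t, X t = ∫ s in (0:ℝ)..t, B s) :
    ∀ t : ℝ,
      HasDerivAt X (B t) t ∧
      HasDerivAt B
        (-(p1 * p2 * bR * bN * (ac - ad) / N0) * (X t) ^ 2 +
          ((p2 * bN * (ac - ad) * R0 + p1 * bR * ac * N0) / N0 + g * p3 * bA)
            * X t -
          (ac * R0 + g * A0)) t :=
  stmt_9_general B R N A p1 p2 p3 bR bN bA ac ad g R0 N0 A0 hN0 hBcont hB hR hN hA hR0 hN0' hA0 X hX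
end

section
/- Let b1, b2, b3 ≥ 0 and a ≥ 0. Define Π* = (1,0,0) if b1 ≥ b2 and b1 ≥ b3; Π* = (0,1,0) if b2 ≥ b1 ≥ b3 or b2 ≥ b3 ≥ b1; Π* = (0,0,1) if b3 ≥ b1 ≥ b2 or b3 ≥ b2 ≥ b1. Then for every λ ∈ [0,1] and every (x,y,z) in the standard 2-simplex, F(x,y,z) = λ·a·x·y − (1−λ)·(b1·x + b2·y + b3·z) ≥ F(Π*). -/
/-!
On the simplex the term `l * a * x * y` is nonnegative and vanishes at every vertex, while the
threat `b1 * x + b2 * y + b3 * z` is a convex combination of the rates, hence at most their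
maximum, which it attains at the vertex `Π*` of a largest rate. So `Π*` minimises both parts of
`F` at once, and `F ≥ -(1 - l) * max b1 (max b2 b3) = F(Π*)`.
-/

open scoped Classical in
noncomputable def maxThreatVertex (b1 b2 b3 : ℝ) : ℝ × ℝ × ℝ :=
  if b1 ≥ b2 ∧ b1 ≥ b3 then (1, 0, 0)
  else if (b2 ≥ b1 ∧ b1 ≥ b3) ∨ (b2 ≥ b3 ∧ b3 ≥ b1) then (0, 1, 0)
  else (0, 0, 1)

lemma maxThreatVertex_fst_mul_snd (b1 b2 b3 : ℝ) :
    (maxThreatVertex b1 b2 b3).1 * (maxThreatVertex b1 b2 b3).2.1 = 0 := by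
  unfold maxThreatVertex
  split_ifs <;> simp

lemma threat_maxThreatVertex (b1 b2 b3 : ℝ) :
    b1 * (maxThreatVertex b1 b2 b3).1 + b2 * (maxThreatVertex b1 b2 b3).2.1
      + b3 * (maxThreatVertex b1 b2 b3).2.2 = max b1 (max b2 b3) := by
  unfold maxThreatVertex
  split_ifs <;> simp only [mul_one, mul_zero, add_zero, zero_add] <;> grind

lemma threat_le_max {b1 b2 b3 x y z : ℝ} (hx : 0 ≤ x) (hy : 0 ≤ y) (hz : 0 ≤ z)
    (hs : x + y + z = 1) : b1 * x + b2 * y + b3 * z ≤ max b1 (max b2 b3) := by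
  set m := max b1 (max b2 b3)
  calc b1 * x + b2 * y + b3 * z ≤ m * x + m * y + m * z := by
        gcongr
        · exact le_max_left _ _
        · exact (le_max_left _ _).trans (le_max_right _ _)
        · exact (le_max_right _ _).trans (le_max_right _ _)
    _ = m := by rw [← mul_add, ← mul_add, hs, mul_one]

lemma neg_max_threat_le_objective {a l b1 b2 b3 x y z : ℝ} (ha : 0 ≤ a) (hl0 : 0 ≤ l)
    (hl1 : l ≤ 1) (hx : 0 ≤ x) (hy : 0 ≤ y) (hz : 0 ≤ z) (hs : x + y + z = 1) :
    -((1 - l) * max b1 (max b2 b3)) ≤ l * a * x * y - (1 - l) * (b1 * x + b2 * y + b3 * z) := by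
  have attrition_nonneg : 0 ≤ l * a * x * y := by positivity
  have threat_bound := mul_le_mul_of_nonneg_left (threat_le_max (b1 := b1) (b2 := b2)
    (b3 := b3) hx hy hz hs) (sub_nonneg.2 hl1)
  linarith

open scoped Classical in
theorem stmt_13_general (a b1 b2 b3 : ℝ)
    (ha : 0 ≤ a)
    (Pstar : ℝ × ℝ × ℝ)
    (hPstar : Pstar =
      if b1 ≥ b2 ∧ b1 ≥ b3 then (1, 0, 0)
      else if (b2 ≥ b1 ∧ b1 ≥ b3) ∨ (b2 ≥ b3 ∧ b3 ≥ b1) then (0, 1, 0)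
      else (0, 0, 1))
    (F : ℝ → ℝ → ℝ → ℝ → ℝ)
    (hF : ∀ l x y z : ℝ,
      F l x y z = l * a * x * y - (1 - l) * (b1 * x + b2 * y + b3 * z)) :
    ∀ l : ℝ, 0 ≤ l → l ≤ 1 →
      ∀ x y z : ℝ, 0 ≤ x → 0 ≤ y → 0 ≤ z → x + y + z = 1 →
        F l x y z ≥ F l Pstar.1 Pstar.2.1 Pstar.2.2 := by
  intro l hl0 hl1 x y z hx hy hz hs
  have hP : Pstar = maxThreatVertex b1 b2 b3 := hPstar
  have value_at_vertex :
      F l Pstar.1 Pstar.2.1 Pstar.2.2 = -((1 - l) * max b1 (max b2 b3)) := by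
    rw [hF, hP, mul_assoc (l * a), maxThreatVertex_fst_mul_snd, threat_maxThreatVertex]
    ring
  rw [ge_iff_le, value_at_vertex, hF]
  exact neg_max_threat_le_objective ha hl0 hl1 hx hy hz hs

open scoped Classical in
theorem stmt_13 (a b1 b2 b3 : ℝ)
    (ha : 0 ≤ a) (hb1 : 0 ≤ b1) (hb2 : 0 ≤ b2) (hb3 : 0 ≤ b3)
    (Pstar : ℝ × ℝ × ℝ)
    (hPstar : Pstar =
      if b1 ≥ b2 ∧ b1 ≥ b3 then (1, 0, 0)
      else if (b2 ≥ b1 ∧ b1 ≥ b3) ∨ (b2 ≥ b3 ∧ b3 ≥ b1) then (0, 1, 0)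
      else (0, 0, 1))
    (F : ℝ → ℝ → ℝ → ℝ → ℝ)
    (hF : ∀ l x y z : ℝ,
      F l x y z = l * a * x * y - (1 - l) * (b1 * x + b2 * y + b3 * z)) :
    ∀ l : ℝ, 0 ≤ l → l ≤ 1 →
      ∀ x y z : ℝ, 0 ≤ x → 0 ≤ y → 0 ≤ z → x + y + z = 1 →
        F l x y z ≥ F l Pstar.1 Pstar.2.1 Pstar.2.2 :=
  stmt_13_general a b1 b2 b3 ha Pstar hPstar F hF
end
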